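/- (Linear convergence to the limit price.) Assume in addition that h is bounded above by a constant M ≥ 0. Then the sequence q_n converges uniformly to q(y) := sup_{n ∈ ℕ₀} q_n(y) at a linear rate with factor c: for all n ∈ ℕ₀ and all y ∈ ℝ^d, 0 ≤ q(y) − q_n(y) ≤ (c^n / (1 − c)) · sup_{z ∈ ℝ^d} |q_1(z) − q_0(z)|, where q_n = D^n(max(g, 0)). -/

import Mathlib

/-!
The iterates `q n = Dⁿ q₀` increase, because `D` is monotone and `q₀ ≤ D q₀`. They stay below the
`A`-harmonic majorant `h ≤ M`, so `S = sup |q₁ - q₀|` is finite. Since `A` is monotone and commutes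
with adding constants, `f ≤ f' + ε` implies `D f ≤ D f' + c ε`; hence `q (n+1) - q n ≤ cⁿ S`, and
summing the geometric tail bounds the distance from `q n` to the supremum.
-/

open Finset

/-- The weighted arithmetic average operator:
`(A f)(y) = ∑ k, α k * f (y - x k)`. -/
noncomputable def avgOp (d m : ℕ) (α : Fin m → ℝ) (x : Fin m → (Fin d → ℝ))
    (f : (Fin d → ℝ) → ℝ) : (Fin d → ℝ) → ℝ :=
  fun y => ∑ k, α k * f (y - x k)

/-- The Bermudan iteration operator: `(D f)(y) = max (c * (A f)(y)) (g y)`. -/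
noncomputable def bermOp (d m : ℕ) (α : Fin m → ℝ) (x : Fin m → (Fin d → ℝ))
    (c : ℝ) (g : (Fin d → ℝ) → ℝ) (f : (Fin d → ℝ) → ℝ) : (Fin d → ℝ) → ℝ :=
  fun y => max (c * avgOp d m α x f y) (g y)

theorem Monotone.ciSup_sub_le_of_succ_sub_le_geometric {u : ℕ → ℝ} (hu : Monotone u)
    {c S : ℝ} (hc : c < 1) (hstep : ∀ n, u (n + 1) - u n ≤ c ^ n * S) (n : ℕ) :
    0 ≤ (⨆ k, u k) - u n ∧ (⨆ k, u k) - u n ≤ c ^ n / (1 - c) * S := by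
  have hdist : ∀ n, dist (u n) (u (n + 1)) ≤ S * c ^ n := fun n => by
    rw [Real.dist_eq, abs_sub_comm, abs_of_nonneg (sub_nonneg.2 (hu n.le_succ)), mul_comm]
    exact hstep n
  obtain ⟨a, hlim⟩ := cauchySeq_tendsto_of_complete (cauchySeq_of_le_geometric c S hc hdist)
  rw [(isLUB_of_tendsto_atTop hu hlim).ciSup_eq]
  have hle : u n ≤ a := hu.ge_of_tendsto hlim n
  have hclose := dist_le_of_le_geometric_of_tendsto c S hc hdist hlim n
  rw [Real.dist_eq, abs_sub_comm, abs_of_nonneg (sub_nonneg.2 hle)] at hclose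
  exact ⟨sub_nonneg.2 hle, hclose.trans_eq (by ring)⟩

theorem iterate_succ_le_iterate_add_geometric {ι : Type*} {T : (ι → ℝ) → ι → ℝ} {c S : ℝ}
    (hc : 0 ≤ c) (hS : 0 ≤ S)
    (hT : ∀ f f' ε, 0 ≤ ε → (∀ y, f y ≤ f' y + ε) → ∀ y, T f y ≤ T f' y + c * ε)
    {f₀ : ι → ℝ} (hf₀ : ∀ y, T f₀ y ≤ f₀ y + S) (n : ℕ) (y : ι) :
    T^[n + 1] f₀ y ≤ T^[n] f₀ y + c ^ n * S := by
  induction n generalizing y with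
  | zero => simpa using hf₀ y
  | succ n ih =>
    have := hT _ _ _ (by positivity) ih y
    rwa [← Function.iterate_succ_apply' T (n + 1), ← Function.iterate_succ_apply' T n, ← mul_assoc,
      ← pow_succ'] at this

section Operators

variable {d m : ℕ} {α : Fin m → ℝ} {x : Fin m → (Fin d → ℝ)} {c : ℝ} {g : (Fin d → ℝ) → ℝ}

theorem avgOp_mono (hα : ∀ k, 0 ≤ α k) : Monotone (avgOp d m α x) :=
  fun _ _ hff' _ => sum_le_sum fun k _ => mul_le_mul_of_nonneg_left (hff' _) (hα k)

theorem avgOp_add_const (hsum : ∑ k, α k = 1) (f : (Fin d → ℝ) → ℝ) (ε : ℝ) (y : Fin d → ℝ) :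
    avgOp d m α x (fun z => f z + ε) y = avgOp d m α x f y + ε := by
  simp only [avgOp, mul_add, sum_add_distrib, ← sum_mul, hsum, one_mul]

theorem bermOp_mono (hα : ∀ k, 0 ≤ α k) (hc : 0 ≤ c) : Monotone (bermOp d m α x c g) :=
  fun _ _ hff' y => max_le_max (mul_le_mul_of_nonneg_left (avgOp_mono hα hff' y) hc) le_rfl

theorem bermOp_le_add_of_le_add (hα : ∀ k, 0 ≤ α k) (hsum : ∑ k, α k = 1) (hc : 0 ≤ c)
    {f f' : (Fin d → ℝ) → ℝ} {ε : ℝ} (hε : 0 ≤ ε) (hff' : ∀ y, f y ≤ f' y + ε) (y : Fin d → ℝ) :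
    bermOp d m α x c g f y ≤ bermOp d m α x c g f' y + c * ε := by
  have hA : avgOp d m α x f y ≤ avgOp d m α x f' y + ε :=
    (avgOp_mono hα hff' y).trans_eq (avgOp_add_const hsum f' ε y)
  have hcε : 0 ≤ c * ε := mul_nonneg hc hε
  unfold bermOp
  refine max_le ?_ ?_
  · nlinarith [le_max_left (c * avgOp d m α x f' y) (g y)]
  · linarith [le_max_right (c * avgOp d m α x f' y) (g y)]

theorem max_zero_le_bermOp (hα : ∀ k, 0 ≤ α k) (hc : 0 ≤ c) (y : Fin d → ℝ) :
    max (g y) 0 ≤ bermOp d m α x c g (fun z => max (g z) 0) y := by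
  have hA : 0 ≤ avgOp d m α x (fun z => max (g z) 0) y :=
    sum_nonneg fun k _ => mul_nonneg (hα k) (le_max_right _ _)
  exact max_le (le_max_right _ _) ((mul_nonneg hc hA).trans (le_max_left _ _))

theorem bermOp_le_of_le {h f : (Fin d → ℝ) → ℝ} (hα : ∀ k, 0 ≤ α k) (hc : c ∈ Set.Icc (0 : ℝ) 1)
    (hh : ∀ y, avgOp d m α x h y ≤ h y) (hgh : ∀ y, max 0 (g y) ≤ h y) (hfh : f ≤ h) :
    bermOp d m α x c g f ≤ h := fun y => by
  have hAh : avgOp d m α x f y ≤ h y := (avgOp_mono hα hfh y).trans (hh y)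
  have hh0 : 0 ≤ h y := (le_max_left _ _).trans (hgh y)
  refine max_le ?_ ((le_max_right _ _).trans (hgh y))
  nlinarith [hc.1, hc.2]

end Operators

theorem q_linear_convergence_to_limit_general (d m : ℕ)
    (α : Fin m → ℝ) (hα : ∀ k, α k ∈ Set.Icc (0:ℝ) 1) (hsum : ∑ k, α k = 1)
    (x : Fin m → (Fin d → ℝ))
    (c : ℝ) (hc : c ∈ Set.Ioo (0:ℝ) 1)
    (g h : (Fin d → ℝ) → ℝ)
    (hh : ∀ y, avgOp d m α x h y = h y)
    (hgh : ∀ y, max 0 (g y) ≤ h y)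
    (M : ℝ) (hhM : ∀ y, h y ≤ M)
    (q : ℕ → (Fin d → ℝ) → ℝ)
    (hq : ∀ n, q n = (bermOp d m α x c g)^[n] (fun y => max (g y) 0))
    (qsup : (Fin d → ℝ) → ℝ) (hqsup : ∀ y, qsup y = ⨆ n : ℕ, q n y) :
    ∀ (n : ℕ) (y : Fin d → ℝ),
      0 ≤ qsup y - q n y ∧
        qsup y - q n y ≤ (c ^ n / (1 - c)) * ⨆ z, |q 1 z - q 0 z| := by
  intro n y
  have hα0 : ∀ k, 0 ≤ α k := fun k => (hα k).1
  have hq_mono : Monotone q := by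
    rw [show q = _ from funext hq]
    exact (bermOp_mono hα0 hc.1.le).monotone_iterate_of_le_map (max_zero_le_bermOp hα0 hc.1.le)
  have hq_le_h : ∀ n, q n ≤ h := fun n => by
    rw [hq]
    refine Set.MapsTo.iterate (s := {f | f ≤ h}) (fun f hf => ?_) n ?_
    · exact bermOp_le_of_le hα0 (Set.Ioo_subset_Icc_self hc) (fun y => (hh y).le) hgh hf
    · exact fun y => (max_comm (g y) 0).trans_le (hgh y)
  have hq0_nonneg : ∀ z, 0 ≤ q 0 z := fun z => by simp [hq]
  have hbdd : BddAbove (Set.range fun z => |q 1 z - q 0 z|) := by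
    refine ⟨M, Set.forall_mem_range.2 fun z => abs_sub_le_iff.2 ⟨?_, ?_⟩⟩
    · linarith [hq_le_h 1 z, hhM z, hq0_nonneg z]
    · linarith [hq_mono zero_le_one z, hq0_nonneg z, hq_le_h 0 z, hhM z]
  set S := ⨆ z, |q 1 z - q 0 z|
  have hS : 0 ≤ S := Real.iSup_nonneg fun _ => abs_nonneg _
  have hq1 : ∀ z, q 1 z ≤ q 0 z + S := fun z => by
    linarith [(le_abs_self (q 1 z - q 0 z)).trans (le_ciSup hbdd z)]
  have hstep : ∀ k, q (k + 1) y - q k y ≤ c ^ k * S := fun k => by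
    rw [hq, hq, sub_le_iff_le_add']
    refine iterate_succ_le_iterate_add_geometric hc.1.le hS
      (fun _ _ _ hε hf => bermOp_le_add_of_le_add hα0 hsum hc.1.le hε hf) (fun z => ?_) k y
    simpa only [hq, Function.iterate_one, Function.iterate_zero, id] using hq1 z
  rw [hqsup]
  exact Monotone.ciSup_sub_le_of_succ_sub_le_geometric (fun _ _ hkl => hq_mono hkl y) hc.2 hstep n

/-- linear convergence to the limit price:
`0 ≤ q(y) - q_n(y) ≤ (c^n / (1 - c)) * ‖q_1 - q_0‖_∞`. -/
theorem q_linear_convergence_to_limit (d m : ℕ) (hm : 1 ≤ m)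
    (α : Fin m → ℝ) (hα : ∀ k, α k ∈ Set.Icc (0:ℝ) 1) (hsum : ∑ k, α k = 1)
    (x : Fin m → (Fin d → ℝ))
    (c : ℝ) (hc : c ∈ Set.Ioo (0:ℝ) 1)
    (g h : (Fin d → ℝ) → ℝ)
    (hg : ∀ y, g y ≤ avgOp d m α x g y)
    (hh : ∀ y, avgOp d m α x h y = h y)
    (hgh : ∀ y, max 0 (g y) ≤ h y)
    (M : ℝ) (hM : 0 ≤ M) (hhM : ∀ y, h y ≤ M)
    (q : ℕ → (Fin d → ℝ) → ℝ)
    (hq : ∀ n, q n = (bermOp d m α x c g)^[n] (fun y => max (g y) 0))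
    (qsup : (Fin d → ℝ) → ℝ) (hqsup : ∀ y, qsup y = ⨆ n : ℕ, q n y) :
    ∀ (n : ℕ) (y : Fin d → ℝ),
      0 ≤ qsup y - q n y ∧
        qsup y - q n y ≤ (c ^ n / (1 - c)) * ⨆ z, |q 1 z - q 0 z| :=
  q_linear_convergence_to_limit_general d m α hα hsum x c hc g h hh hgh M hhM q hq qsup hqsup
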